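/- If Bott matrices A, B ∈ 𝔅(n) are Bott equivalent, then the orbit spaces T^n/G(A) and T^n/G(B), with their quotient topologies, are homeomorphic. -/

import Mathlib

open Matrix

/-- A Bott matrix: conjugate by a permutation matrix to a strictly upper
triangular binary matrix. -/
def IsBott {n : ℕ} (A : Matrix (Fin n) (Fin n) (ZMod 2)) : Prop :=
  ∃ (σ : Equiv.Perm (Fin n)) (B : Matrix (Fin n) (Fin n) (ZMod 2)),
    (∀ i j : Fin n, j ≤ i → B i j = 0) ∧
    A = σ.permMatrix (ZMod 2) * B * (σ⁻¹).permMatrix (ZMod 2)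

/-- (Op1) conjugation by a permutation matrix. -/
def PhiP {n : ℕ} (σ : Equiv.Perm (Fin n)) (A : Matrix (Fin n) (Fin n) (ZMod 2)) :
    Matrix (Fin n) (Fin n) (ZMod 2) :=
  σ.permMatrix (ZMod 2) * A * (σ⁻¹).permMatrix (ZMod 2)

/-- (Op2) `Φ_k(A)_j = A_j + A^k_j A_k`. -/
def Phi2 {n : ℕ} (k : Fin n) (A : Matrix (Fin n) (Fin n) (ZMod 2)) :
    Matrix (Fin n) (Fin n) (ZMod 2) :=
  fun i j => A i j + A k j * A i k

/-- (Op3) `Φ^{ℓ,m}(A)`: add the `ℓ`-th row to the `m`-th row. -/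
def Phi3 {n : ℕ} (l m : Fin n) (A : Matrix (Fin n) (Fin n) (ZMod 2)) :
    Matrix (Fin n) (Fin n) (ZMod 2) :=
  fun i j => if i = m then A l j + A m j else A i j

/-- One application of one of the operations (Op1), (Op2), (Op3). -/
inductive BottStep {n : ℕ} :
    Matrix (Fin n) (Fin n) (ZMod 2) → Matrix (Fin n) (Fin n) (ZMod 2) → Prop
  | op1 (σ : Equiv.Perm (Fin n)) (A) : BottStep A (PhiP σ A)
  | op2 (k : Fin n) (A) : BottStep A (Phi2 k A)
  | op3 (l m : Fin n) (A) (h : l ≠ m) (hc : ∀ i, A i l = A i m) :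
      BottStep A (Phi3 l m A)

/-- Bott equivalence of Bott matrices: a finite sequence of the operations
(Op1), (Op2), (Op3). -/
def BottEquivM {n : ℕ} (A B : Matrix (Fin n) (Fin n) (ZMod 2)) : Prop :=
  Relation.ReflTransGen BottStep A B

/-- The torus `T^n = (S¹)^n ⊆ ℂ^n`. -/
abbrev Torus (n : ℕ) : Type :=
  {z : Fin n → ℂ // ∀ i, ‖z i‖ = 1}

/-- `z(a)`: `z` if `a = 0` and the complex conjugate `z̄` if `a = 1`. -/
noncomputable def conjPow (a : ZMod 2) (z : ℂ) : ℂ :=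
  if a = 0 then z else (starRingEnd ℂ) z

/-- The involution `a_i` of `ℂ^n` associated with a binary matrix `A`. -/
noncomputable def aMap {n : ℕ} (A : Matrix (Fin n) (Fin n) (ZMod 2)) (i : Fin n)
    (z : Fin n → ℂ) : Fin n → ℂ :=
  fun j => if j = i then -z i else conjPow (A i j) (z j)

lemma aMap_mem {n : ℕ} (A : Matrix (Fin n) (Fin n) (ZMod 2)) (i : Fin n)
    (z : Fin n → ℂ) (hz : ∀ j, ‖z j‖ = 1) (j : Fin n) :
    ‖aMap A i z j‖ = 1 := by
  unfold aMap conjPow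
  split_ifs <;> simp [hz]

/-- The involution `a_i` of `T^n`. -/
noncomputable def aMapT {n : ℕ} (A : Matrix (Fin n) (Fin n) (ZMod 2)) (i : Fin n)
    (z : Torus n) : Torus n :=
  ⟨aMap A i z.1, aMap_mem A i z.1 z.2⟩

/-- The composition `∏_{i ∈ S} a_i` on `T^n`. -/
noncomputable def prodMapT {n : ℕ} (A : Matrix (Fin n) (Fin n) (ZMod 2))
    (S : Finset (Fin n)) : Torus n → Torus n :=
  (S.sort (· ≤ ·)).foldr (fun i f => aMapT A i ∘ f) id

/-- The orbit relation of the group `G(A)` (generated by `a_1,…,a_n`) on `T^n`. -/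
def orbitRel {n : ℕ} (A : Matrix (Fin n) (Fin n) (ZMod 2)) :
    Torus n → Torus n → Prop :=
  fun z w => ∃ S : Finset (Fin n), prodMapT A S z = w

/-- The orbit space `T^n/G(A)` with its quotient topology. -/
def OrbitSpace {n : ℕ} (A : Matrix (Fin n) (Fin n) (ZMod 2)) : Type :=
  Quot (orbitRel A)

noncomputable instance {n : ℕ} (A : Matrix (Fin n) (Fin n) (ZMod 2)) :
    TopologicalSpace (OrbitSpace A) :=
  instTopologicalSpaceQuot

/-!
For `A` with zero diagonal, every element of `G(A)` has the closed form
`z ↦ ((-1)^{v_q} z_q((vA)_q))_q` for some `v ∈ 𝔽₂ⁿ`, so two points lie in one orbit iff one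
is the image of the other under such a map. Each Bott operation is realised by a homeomorphism
of `T^n` carrying the map of `v` for the old matrix to the map of `φ v` for the new one, with
`φ` a bijection of `𝔽₂ⁿ`: permuting coordinates for (Op1), rotating the `k`-th circle by `i`
for (Op2), and `z_ℓ ↦ z_ℓ z_m` for (Op3). Such a homeomorphism descends to the orbit spaces.
The zero diagonal survives every step because a Bott matrix is the adjacency matrix of an
acyclic digraph, and acyclicity (a strictly increasing height function) is preserved by the
three operations.
-/

section

variable {n : ℕ}

lemma zmod_two_eq_zero_or_one (a : ZMod 2) : a = 0 ∨ a = 1 := by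
  revert a; decide

noncomputable def zmodSign (a : ZMod 2) : ℂ := if a = 0 then 1 else -1

lemma zmodSign_add (a b : ZMod 2) : zmodSign (a + b) = zmodSign a * zmodSign b := by
  rcases zmod_two_eq_zero_or_one a with rfl | rfl <;>
    rcases zmod_two_eq_zero_or_one b with rfl | rfl <;>
    simp [zmodSign, CharTwo.add_self_eq_zero]

@[simp] lemma zmodSign_zero : zmodSign 0 = 1 := rfl

@[simp] lemma zmodSign_one : zmodSign 1 = -1 := rfl

lemma norm_zmodSign (a : ZMod 2) : ‖zmodSign a‖ = 1 := by
  rcases zmod_two_eq_zero_or_one a with rfl | rfl <;> simp [zmodSign]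

@[simp] lemma conjPow_zero (z : ℂ) : conjPow 0 z = z := rfl

@[simp] lemma conjPow_one (z : ℂ) : conjPow 1 z = starRingEnd ℂ z := rfl

lemma conjPow_add (a b : ZMod 2) (z : ℂ) : conjPow (a + b) z = conjPow a (conjPow b z) := by
  rcases zmod_two_eq_zero_or_one a with rfl | rfl <;>
    rcases zmod_two_eq_zero_or_one b with rfl | rfl <;> simp [CharTwo.add_self_eq_zero]

lemma conjPow_mul (a : ZMod 2) (x y : ℂ) : conjPow a (x * y) = conjPow a x * conjPow a y := by
  rcases zmod_two_eq_zero_or_one a with rfl | rfl <;> simp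

lemma conjPow_zmodSign (a b : ZMod 2) : conjPow a (zmodSign b) = zmodSign b := by
  rcases zmod_two_eq_zero_or_one a with rfl | rfl <;>
    rcases zmod_two_eq_zero_or_one b with rfl | rfl <;> simp [zmodSign]

lemma norm_conjPow (a : ZMod 2) (z : ℂ) : ‖conjPow a z‖ = ‖z‖ := by
  rcases zmod_two_eq_zero_or_one a with rfl | rfl <;> simp

lemma zmodSign_mul_conjPow_I (a : ZMod 2) : zmodSign a * conjPow a Complex.I = Complex.I := by
  rcases zmod_two_eq_zero_or_one a with rfl | rfl <;> simp [zmodSign]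

def torusHomeomorph (f g : (Fin n → ℂ) → Fin n → ℂ) (hf : Continuous f) (hg : Continuous g)
    (hfT : ∀ z : Torus n, ∀ q, ‖f z.1 q‖ = 1) (hgT : ∀ z : Torus n, ∀ q, ‖g z.1 q‖ = 1)
    (hgf : ∀ z : Torus n, g (f z.1) = z.1) (hfg : ∀ z : Torus n, f (g z.1) = z.1) :
    Torus n ≃ₜ Torus n where
  toFun z := ⟨f z.1, hfT z⟩
  invFun z := ⟨g z.1, hgT z⟩
  left_inv z := Subtype.ext (hgf z)
  right_inv z := Subtype.ext (hfg z)
  continuous_toFun := (hf.comp continuous_subtype_val).subtype_mk _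
  continuous_invFun := (hg.comp continuous_subtype_val).subtype_mk _

@[simp] lemma torusHomeomorph_apply_coe (f g : (Fin n → ℂ) → Fin n → ℂ) (hf hg hfT hgT hgf hfg)
    (z : Torus n) : (torusHomeomorph f g hf hg hfT hgT hgf hfg z).1 = f z.1 := rfl

def permTorus (ρ : Equiv.Perm (Fin n)) : Torus n ≃ₜ Torus n :=
  torusHomeomorph (· ∘ ρ) (· ∘ ρ.symm) (by fun_prop) (by fun_prop)
    (fun z q => z.2 _) (fun z q => z.2 _) (fun z => by ext; simp) (fun z => by ext; simp)

noncomputable def quarterTurn (k : Fin n) : Torus n ≃ₜ Torus n :=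
  torusHomeomorph (fun z => Function.update z k (Complex.I * z k))
    (fun z => Function.update z k (-Complex.I * z k)) (by fun_prop) (by fun_prop)
    (fun z q => by rcases eq_or_ne q k with rfl | hq <;> simp [*, z.2 q])
    (fun z q => by rcases eq_or_ne q k with rfl | hq <;> simp [*, z.2 q])
    (fun z => by ext q; rcases eq_or_ne q k with rfl | hq <;> simp [*, ← mul_assoc])
    (fun z => by ext q; rcases eq_or_ne q k with rfl | hq <;> simp [*, ← mul_assoc])

noncomputable def shearTorus (l m : Fin n) (hlm : l ≠ m) : Torus n ≃ₜ Torus n :=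
  torusHomeomorph (fun z => Function.update z l (z l * z m))
    (fun z => Function.update z l (z l * starRingEnd ℂ (z m))) (by fun_prop) (by fun_prop)
    (fun z q => by rcases eq_or_ne q l with rfl | hq <;> simp [*, z.2 _])
    (fun z q => by rcases eq_or_ne q l with rfl | hq <;> simp [*, z.2 _])
    (fun z => by
      ext q; rcases eq_or_ne q l with rfl | hq <;> simp [*, hlm.symm, mul_assoc, Complex.mul_conj', z.2 m])
    (fun z => by
      ext q; rcases eq_or_ne q l with rfl | hq <;>
        simp [*, hlm.symm, mul_assoc, Complex.conj_mul', z.2 m])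

/-- For `A` with zero diagonal, the element `∏ᵢ aᵢ ^ vᵢ` of `G(A)` (see `prodMapT_eq_bottAct`). -/
noncomputable def bottAct (A : Matrix (Fin n) (Fin n) (ZMod 2)) (v : Fin n → ZMod 2)
    (z : Torus n) : Torus n :=
  ⟨fun q => zmodSign (v q) * conjPow ((v ᵥ* A) q) (z.1 q), fun q => by
    rw [norm_mul, norm_zmodSign, norm_conjPow, z.2, one_mul]⟩

lemma bottAct_apply (A : Matrix (Fin n) (Fin n) (ZMod 2)) (v : Fin n → ZMod 2) (z : Torus n)
    (q : Fin n) : (bottAct A v z).1 q = zmodSign (v q) * conjPow ((v ᵥ* A) q) (z.1 q) := rfl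

lemma bottAct_zero (A : Matrix (Fin n) (Fin n) (ZMod 2)) (z : Torus n) : bottAct A 0 z = z := by
  ext q; simp [bottAct_apply]

lemma aMapT_bottAct {A : Matrix (Fin n) (Fin n) (ZMod 2)} (hA : ∀ i, A i i = 0) (i : Fin n)
    (v : Fin n → ZMod 2) (z : Torus n) :
    aMapT A i (bottAct A v z) = bottAct A (Pi.single i 1 + v) z := by
  ext q
  simp only [aMapT, aMap, bottAct_apply, add_vecMul, single_vecMul, one_smul, Pi.add_apply,
    zmodSign_add, Pi.single_apply, row_apply]
  rcases eq_or_ne q i with rfl | hq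
  · simp [hA]
  · simp [hq, conjPow_mul, conjPow_zmodSign, conjPow_add]

lemma prodMapT_eq_bottAct {A : Matrix (Fin n) (Fin n) (ZMod 2)} (hA : ∀ i, A i i = 0)
    (S : Finset (Fin n)) (z : Torus n) :
    prodMapT A S z = bottAct A (∑ i ∈ S, Pi.single i 1) z := by
  have hfold : ∀ L : List (Fin n),
      L.foldr (fun i f => aMapT A i ∘ f) id z = bottAct A (L.map (Pi.single · 1)).sum z := by
    intro L
    induction L with
    | nil => exact (bottAct_zero A z).symm
    | cons i L ih => simp [ih, aMapT_bottAct hA]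
  rw [prodMapT, hfold, ((S.sort_perm_toList _).map _).sum_eq, Finset.sum_map_toList]

lemma orbitRel_iff_exists_bottAct {A : Matrix (Fin n) (Fin n) (ZMod 2)} (hA : ∀ i, A i i = 0)
    (z w : Torus n) : orbitRel A z w ↔ ∃ v, bottAct A v z = w := by
  constructor
  · rintro ⟨S, rfl⟩
    exact ⟨_, (prodMapT_eq_bottAct hA S z).symm⟩
  · rintro ⟨v, rfl⟩
    refine ⟨({i | v i = 1} : Finset (Fin n)), ?_⟩
    rw [prodMapT_eq_bottAct hA]
    congr 1
    ext j
    rcases zmod_two_eq_zero_or_one (v j) with h | h <;> simp [Finset.sum_apply, Pi.single_apply, h]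

lemma nonempty_orbitSpace_homeomorph_of_intertwining {A B : Matrix (Fin n) (Fin n) (ZMod 2)}
    (hA : ∀ i, A i i = 0) (hB : ∀ i, B i i = 0) (h : Torus n ≃ₜ Torus n)
    {φ : (Fin n → ZMod 2) → Fin n → ZMod 2} (hφ : φ.Surjective)
    (hh : ∀ v z, h (bottAct A v z) = bottAct B (φ v) (h z)) :
    Nonempty (OrbitSpace A ≃ₜ OrbitSpace B) := by
  refine ⟨Homeomorph.Quot.congr h fun z w => ?_⟩
  rw [orbitRel_iff_exists_bottAct hA, orbitRel_iff_exists_bottAct hB]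
  constructor
  · rintro ⟨v, rfl⟩
    exact ⟨φ v, (hh v z).symm⟩
  · rintro ⟨u, hu⟩
    obtain ⟨v, rfl⟩ := hφ u
    exact ⟨v, h.injective (by rw [hh, hu])⟩

def Matrix.IsAcyclic {ι R : Type*} [Zero R] (A : Matrix ι ι R) : Prop :=
  ∃ f : ι → ℕ, ∀ i j, A i j ≠ 0 → f i < f j

lemma Matrix.IsAcyclic.diag_eq_zero {ι R : Type*} [Zero R] {A : Matrix ι ι R} (hA : A.IsAcyclic)
    (i : ι) : A i i = 0 := by
  obtain ⟨f, hf⟩ := hA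
  by_contra h
  exact (hf i i h).false

lemma PhiP_eq_submatrix (σ : Equiv.Perm (Fin n)) (A : Matrix (Fin n) (Fin n) (ZMod 2)) :
    PhiP σ A = A.submatrix σ σ := by
  ext i j
  simp [PhiP, Equiv.Perm.permMatrix, PEquiv.toMatrix_toPEquiv_mul, PEquiv.mul_toMatrix_toPEquiv,
    Equiv.Perm.inv_def]

lemma IsBott.isAcyclic {A : Matrix (Fin n) (Fin n) (ZMod 2)} (hA : IsBott A) : A.IsAcyclic := by
  obtain ⟨σ, C, hC, rfl⟩ := hA
  refine ⟨fun i => σ i, fun i j hij => ?_⟩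
  change PhiP σ C i j ≠ 0 at hij
  rw [PhiP_eq_submatrix, submatrix_apply] at hij
  exact lt_of_not_ge fun hji => hij (hC _ _ hji)

lemma Matrix.IsAcyclic.phiP {A : Matrix (Fin n) (Fin n) (ZMod 2)} (hA : A.IsAcyclic)
    (σ : Equiv.Perm (Fin n)) : (PhiP σ A).IsAcyclic := by
  obtain ⟨f, hf⟩ := hA
  exact ⟨f ∘ σ, fun i j hij => hf _ _ (by rwa [PhiP_eq_submatrix] at hij)⟩

lemma Matrix.IsAcyclic.phi2 {A : Matrix (Fin n) (Fin n) (ZMod 2)} (hA : A.IsAcyclic)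
    (k : Fin n) : (Phi2 k A).IsAcyclic := by
  obtain ⟨f, hf⟩ := hA
  refine ⟨f, fun i j hij => ?_⟩
  by_cases hA : A i j = 0
  · have hkj : A k j ≠ 0 := fun h => hij (by simp [Phi2, hA, h])
    have hik : A i k ≠ 0 := fun h => hij (by simp [Phi2, hA, h])
    exact (hf _ _ hik).trans (hf _ _ hkj)
  · exact hf _ _ hA

-- the height of `m` drops to the lower of the heights of `l` and `m`
lemma Matrix.IsAcyclic.phi3 {A : Matrix (Fin n) (Fin n) (ZMod 2)} (hA : A.IsAcyclic)
    {l m : Fin n} (hc : ∀ i, A i l = A i m) : (Phi3 l m A).IsAcyclic := by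
  have hdiag := hA.diag_eq_zero
  obtain ⟨f, hf⟩ := hA
  refine ⟨Function.update f m (min (f l) (f m)), fun i j hij => ?_⟩
  by_cases him : i = m
  · subst him
    have hjm : j ≠ i := by
      rintro rfl
      simp [Phi3, hdiag, ← hc l] at hij
    have : A l j ≠ 0 ∨ A i j ≠ 0 := by
      by_contra! h
      simp [Phi3, h] at hij
    simp only [Function.update_self, Function.update_of_ne hjm]
    rcases this with h | h
    · exact (min_le_left _ _).trans_lt (hf _ _ h)
    · exact (min_le_right _ _).trans_lt (hf _ _ h)
  · simp only [Phi3, him, if_false] at hij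
    rw [Function.update_of_ne him]
    by_cases hjm : j = m
    · subst hjm
      rw [Function.update_self]
      exact lt_min (hf _ _ (by rwa [hc])) (hf _ _ hij)
    · rw [Function.update_of_ne hjm]
      exact hf _ _ hij

lemma permTorus_bottAct (A : Matrix (Fin n) (Fin n) (ZMod 2)) (σ : Equiv.Perm (Fin n))
    (v : Fin n → ZMod 2) (z : Torus n) :
    permTorus σ (bottAct A v z) = bottAct (PhiP σ A) (v ∘ σ) (permTorus σ z) := by
  ext q
  simp [permTorus, bottAct_apply, PhiP_eq_submatrix, submatrix_vecMul_equiv, Function.comp_assoc]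

lemma single_add_vecMul_apply_self {A : Matrix (Fin n) (Fin n) (ZMod 2)} {k : Fin n}
    (hk : A k k = 0) (e : ZMod 2) (v : Fin n → ZMod 2) :
    ((Pi.single k e + v) ᵥ* A) k = (v ᵥ* A) k := by
  simp [add_vecMul, single_vecMul, hk]

lemma vecMul_phi2 {A : Matrix (Fin n) (Fin n) (ZMod 2)} {k : Fin n} (hk : A k k = 0)
    (v : Fin n → ZMod 2) : (Pi.single k ((v ᵥ* A) k) + v) ᵥ* Phi2 k A = v ᵥ* A := by
  have hPhi2 : Phi2 k A = A + vecMulVec (A.col k) (A.row k) := by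
    ext i j; simp [Phi2, vecMulVec, mul_comm]
  have hcol : (Pi.single k ((v ᵥ* A) k) + v) ⬝ᵥ A.col k = (v ᵥ* A) k :=
    single_add_vecMul_apply_self hk _ v
  rw [hPhi2, vecMul_add, vecMul_vecMulVec, add_vecMul, single_vecMul, hcol, add_right_comm,
    ← add_smul, CharTwo.add_self_eq_zero, zero_smul, zero_add]

lemma quarterTurn_bottAct {A : Matrix (Fin n) (Fin n) (ZMod 2)} {k : Fin n} (hk : A k k = 0)
    (v : Fin n → ZMod 2) (z : Torus n) :
    quarterTurn k (bottAct A v z)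
      = bottAct (Phi2 k A) (Pi.single k ((v ᵥ* A) k) + v) (quarterTurn k z) := by
  ext q
  simp only [quarterTurn, torusHomeomorph_apply_coe, bottAct_apply, vecMul_phi2 hk]
  rcases eq_or_ne q k with rfl | hq
  · simp only [Function.update_self, Pi.add_apply, Pi.single_eq_same, zmodSign_add,
      conjPow_mul]
    linear_combination -(zmodSign (v q) * conjPow ((v ᵥ* A) q) (z.1 q)) *
      zmodSign_mul_conjPow_I ((v ᵥ* A) q)
  · simp [hq, bottAct_apply]

lemma vecMul_phi3 (A : Matrix (Fin n) (Fin n) (ZMod 2)) {l m : Fin n} (hlm : l ≠ m)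
    (v : Fin n → ZMod 2) : (Pi.single l (v m) + v) ᵥ* Phi3 l m A = v ᵥ* A := by
  have hPhi3 : Phi3 l m A = A + vecMulVec (Pi.single m 1) (A.row l) := by
    ext i j; by_cases hi : i = m <;> simp [Phi3, vecMulVec, Pi.single_apply, hi, add_comm]
  rw [hPhi3, vecMul_add, vecMul_vecMulVec, add_vecMul, single_vecMul, add_right_comm]
  simp [hlm.symm, ← add_smul, CharTwo.add_self_eq_zero]

lemma shearTorus_bottAct {A : Matrix (Fin n) (Fin n) (ZMod 2)} {l m : Fin n} (hlm : l ≠ m)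
    (hc : ∀ i, A i l = A i m) (v : Fin n → ZMod 2) (z : Torus n) :
    shearTorus l m hlm (bottAct A v z)
      = bottAct (Phi3 l m A) (Pi.single l (v m) + v) (shearTorus l m hlm z) := by
  have hlm' : (v ᵥ* A) m = (v ᵥ* A) l := by simp [vecMul, dotProduct, hc]
  ext q
  simp only [shearTorus, torusHomeomorph_apply_coe, bottAct_apply, vecMul_phi3 A hlm]
  rcases eq_or_ne q l with rfl | hq
  · simp only [Function.update_self, Pi.add_apply, Pi.single_eq_same, zmodSign_add,
      conjPow_mul, hlm']
    ring
  · simp [hq, bottAct_apply]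

lemma BottStep.isAcyclic {A B : Matrix (Fin n) (Fin n) (ZMod 2)} (h : BottStep A B)
    (hA : A.IsAcyclic) : B.IsAcyclic := by
  cases h with
  | op1 σ => exact hA.phiP σ
  | op2 k => exact hA.phi2 k
  | op3 l m _ _ hc => exact hA.phi3 hc

lemma BottStep.nonempty_orbitSpace_homeomorph {A B : Matrix (Fin n) (Fin n) (ZMod 2)}
    (h : BottStep A B) (hA : A.IsAcyclic) : Nonempty (OrbitSpace A ≃ₜ OrbitSpace B) := by
  have hB := (h.isAcyclic hA).diag_eq_zero
  cases h with
  | op1 σ =>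
    exact nonempty_orbitSpace_homeomorph_of_intertwining hA.diag_eq_zero hB (permTorus σ)
      (fun u => ⟨u ∘ σ.symm, by ext; simp⟩) (permTorus_bottAct A σ)
  | op2 k =>
    have hk := hA.diag_eq_zero k
    refine nonempty_orbitSpace_homeomorph_of_intertwining hA.diag_eq_zero hB (quarterTurn k)
      (Function.Involutive.surjective fun v => ?_) (quarterTurn_bottAct hk)
    rw [single_add_vecMul_apply_self hk, ← add_assoc, ← Pi.single_add,
      CharTwo.add_self_eq_zero, Pi.single_zero, zero_add]
  | op3 l m _ hlm hc =>
    refine nonempty_orbitSpace_homeomorph_of_intertwining hA.diag_eq_zero hB (shearTorus l m hlm)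
      (Function.Involutive.surjective fun v => ?_) (shearTorus_bottAct hlm hc)
    rw [Pi.add_apply, Pi.single_eq_of_ne hlm.symm, zero_add, ← add_assoc, ← Pi.single_add,
      CharTwo.add_self_eq_zero, Pi.single_zero, zero_add]

end

theorem orbitSpace_homeomorph_of_bottEquiv_general {n : ℕ}
    (A B : Matrix (Fin n) (Fin n) (ZMod 2)) (hA : IsBott A)
    (h : BottEquivM A B) :
    Nonempty (OrbitSpace A ≃ₜ OrbitSpace B) := by
  suffices B.IsAcyclic ∧ Nonempty (OrbitSpace A ≃ₜ OrbitSpace B) from this.2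
  induction h with
  | refl => exact ⟨hA.isAcyclic, ⟨.refl _⟩⟩
  | tail _ hstep ih =>
    obtain ⟨hC, ⟨e⟩⟩ := ih
    obtain ⟨e'⟩ := hstep.nonempty_orbitSpace_homeomorph hC
    exact ⟨hstep.isAcyclic hC, ⟨e.trans e'⟩⟩

/-- If two Bott matrices are Bott equivalent, then the orbit spaces
`T^n/G(A)` and `T^n/G(B)` are homeomorphic. -/
theorem orbitSpace_homeomorph_of_bottEquiv {n : ℕ}
    (A B : Matrix (Fin n) (Fin n) (ZMod 2)) (hA : IsBott A) (hB : IsBott B)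
    (h : BottEquivM A B) :
    Nonempty (OrbitSpace A ≃ₜ OrbitSpace B) :=
  orbitSpace_homeomorph_of_bottEquiv_general A B hA h
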